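/- arXiv:2503.12457 — 2 statements merged into one kernel-verified Lean document; each statement's English description precedes it below -/
import Mathlib

section
/- If a disturbance x̄ at time k is n-step recoverable and the set {m > 0 | x̄ ∈ Reach_m(τ(k+m))} is nonempty, then it has a minimum n* ≤ n, and the recovery trajectory constructed by rejoining the plan at time k+n* is a valid trajectory of the agent transition system that coincides with τ for all times ≥ k+n*. -/
/-- The `n`-step backward reachable set of a state `x`. -/
def Reach {X : Type*} (T : X → X → Prop) (n : ℕ) (x : X) : Set X :=
  {y | ∃ τ : ℕ → X, τ 0 = y ∧ τ n = x ∧ ∀ j < n, T (τ j) (τ (j + 1))}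

/-! Since `x̄ ≠ τ k`, a `0`-step path is impossible, so `n > 0` and `n` itself lies in the set of
admissible horizons; the least element `n*` of that set of naturals is then at most `n`. Following a
witnessing `n*`-step path from `x̄` and switching to `τ` at time `k + n*` gives the recovery
trajectory. -/

section Rejoin

variable {X : Type*} {T : X → X → Prop}

theorem reach_zero (x : X) : Reach T 0 x = {x} := by
  ext y
  refine ⟨fun ⟨σ, hσ0, hσn, _⟩ => hσ0 ▸ hσn, fun hy => ⟨fun _ => x, hy.symm, rfl, by simp⟩⟩

def rejoin (σ τ : ℕ → X) (k m : ℕ) (i : ℕ) : X :=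
  if i < k + m then σ (i - k) else τ i

theorem rejoin_of_le {σ τ : ℕ → X} {k m i : ℕ} (hi : k + m ≤ i) : rejoin σ τ k m i = τ i :=
  if_neg (Nat.not_lt.mpr hi)

theorem rejoin_transition {σ τ : ℕ → X} {k m : ℕ} (hσm : σ m = τ (k + m))
    (hσ : ∀ j < m, T (σ j) (σ (j + 1))) (hτ : ∀ i, k + m ≤ i → T (τ i) (τ (i + 1)))
    {i : ℕ} (hi : k ≤ i) : T (rejoin σ τ k m i) (rejoin σ τ k m (i + 1)) := by
  unfold rejoin
  rcases lt_trichotomy (i + 1) (k + m) with h | h | h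
  · rw [if_pos h, if_pos (by omega), Nat.sub_add_comm hi]
    exact hσ (i - k) (by omega)
  · rw [if_neg h.not_lt, if_pos (by omega), h, ← hσm]
    have hm : i - k + 1 = m := by omega
    simpa only [hm] using hσ (i - k) (by omega)
  · rw [if_neg (by omega), if_neg (by omega)]
    exact hτ i (by omega)

theorem exists_trajectory_rejoin {τ : ℕ → X} {k m : ℕ} {y : X}
    (hy : y ∈ Reach T m (τ (k + m))) (hτ : ∀ i, k + m ≤ i → T (τ i) (τ (i + 1))) :
    ∃ ζ : ℕ → X, ζ k = y ∧ (∀ i, k ≤ i → T (ζ i) (ζ (i + 1))) ∧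
      ∀ i, k + m ≤ i → ζ i = τ i := by
  obtain ⟨σ, hσ0, hσm, hσ⟩ := hy
  refine ⟨rejoin σ τ k m, ?_, fun i hi => rejoin_transition hσm hσ hτ hi,
    fun i hi => rejoin_of_le hi⟩
  rcases Nat.eq_zero_or_pos m with rfl | hm
  · rw [rejoin_of_le (by omega), ← hσ0, hσm, Nat.add_zero]
  · rw [rejoin, if_pos (by omega), Nat.sub_self, hσ0]

end Rejoin

theorem minimal_recovery_trajectory_general {X : Type*} (T : X → X → Prop)
    (τ : ℕ → X) (hτ : ∀ m, T (τ m) (τ (m + 1)))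
    (k n : ℕ) (xbar : X) (hdist : xbar ≠ τ k)
    (hrec : xbar ∈ Reach T n (τ (k + n))) :
    ∃ nstar, IsLeast {m : ℕ | 0 < m ∧ xbar ∈ Reach T m (τ (k + m))} nstar ∧
      nstar ≤ n ∧
      ∃ ζ : ℕ → X, ζ k = xbar ∧ (∀ m, k ≤ m → T (ζ m) (ζ (m + 1))) ∧
        ∀ m, k + nstar ≤ m → ζ m = τ m := by
  set S := {m : ℕ | 0 < m ∧ xbar ∈ Reach T m (τ (k + m))}
  have hn : n ∈ S := by
    refine ⟨Nat.pos_of_ne_zero ?_, hrec⟩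
    rintro rfl
    exact hdist (by simpa [reach_zero] using hrec)
  have hleast : IsLeast S (sInf S) := isLeast_csInf ⟨n, hn⟩
  exact ⟨sInf S, hleast, hleast.2 hn, exists_trajectory_rejoin hleast.1.2 fun i _ => hτ i⟩

/-- if the disturbance `x̄` at time `k` is `n`-step recoverable
and the set `{m > 0 | x̄ ∈ Reach_m(τ(k+m))}` is nonempty, then it has a
minimum `n* ≤ n`, and the recovery trajectory rejoining the plan at time
`k + n*` is a valid trajectory of the agent transition system coinciding with
`τ` for all times `≥ k + n*`. -/
theorem minimal_recovery_trajectory {X : Type*} (T : X → X → Prop)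
    (τ : ℕ → X) (hτ : ∀ m, T (τ m) (τ (m + 1)))
    (k n : ℕ) (xbar : X) (hdist : xbar ≠ τ k)
    (hrec : xbar ∈ Reach T n (τ (k + n)))
    (hne : {m : ℕ | 0 < m ∧ xbar ∈ Reach T m (τ (k + m))}.Nonempty) :
    ∃ nstar, IsLeast {m : ℕ | 0 < m ∧ xbar ∈ Reach T m (τ (k + m))} nstar ∧
      nstar ≤ n ∧
      ∃ ζ : ℕ → X, ζ k = xbar ∧ (∀ m, k ≤ m → T (ζ m) (ζ (m + 1))) ∧
        ∀ m, k + nstar ≤ m → ζ m = τ m :=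
  minimal_recovery_trajectory_general T τ hτ k n xbar hdist hrec
end

section
/- (Synchronization under Disturbance) Let τ^k be the plan at time k and let k*_i = min{k' > k | τ^k(k') ∈ X^i_sync} be agent i's next synchronization time. If every disturbance occurring to agent i at a time κ ∈ [k, k*_i] is (k*_i − κ)-step recoverable with respect to agent i's eigen-plan, and execution follows the minimal-recovery rule (rejoin the eigen-plan at the earliest recoverable future time), then agent i's realized trajectory passes through π_i(τ^k(k*_i)) at time k*_i, i.e., agent i achieves synchronization at time k*_i. -/
theorem mem_reach_zero_iff {X : Type*} {T : X → X → Prop} {x y : X} :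
    y ∈ Reach T 0 x ↔ y = x := by
  constructor
  · rintro ⟨τ, rfl, rfl, -⟩
    rfl
  · rintro rfl
    exact ⟨fun _ => y, rfl, rfl, fun j hj => absurd hj j.not_lt_zero⟩

theorem Nat.eq_of_forall_succ_eq {α : Type*} {f : ℕ → α} {a b : ℕ} (hab : a ≤ b)
    (h : ∀ n, a ≤ n → n < b → f (n + 1) = f n) : f b = f a := by
  induction b, hab using Nat.le_induction with
  | base => rfl
  | succ n han ih =>
    rw [h n han n.lt_succ_self, ih fun m ham hmn => h m ham (hmn.trans n.lt_succ_self)]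

theorem apply_eq_of_isLeast_recovery_horizon {X : Type*} {T : X → X → Prop} {x : X}
    {e e' : ℕ → X} {κ M nstar : ℕ} (hκM : κ ≤ M) (hM : x ∈ Reach T (M - κ) (e M))
    (hleast : IsLeast {n | x ∈ Reach T n (e (κ + n))} nstar)
    (hrejoin : ∀ m, κ + nstar ≤ m → e' m = e m) :
    e' M = e M := by
  have hle : nstar ≤ M - κ := hleast.2 <| show x ∈ Reach T (M - κ) (e (κ + (M - κ))) by
    rwa [Nat.add_sub_cancel' hκM]
  exact hrejoin M (by omega)

/-- Synchronization under Disturbance.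
`plan` is the multi-agent plan `τ^k` at time `k`, `i` a fixed agent with
synchronization states `Xsync` (a set of joint states),
`kstar = min {k' > k | τ^k(k') ∈ X^i_sync}` the next synchronization time,
`e κ` agent `i`'s eigen-plan at time `κ` (initially the projection of `τ^k`),
and `ζ` agent `i`'s realized trajectory.  Execution follows the minimal
recovery rule (Algorithm 2): on a disturbance, rejoin the eigen-plan at the
earliest recoverable future time; otherwise the eigen-plan is unchanged.  If
every disturbance at a time `κ ∈ [k, k*_i]` is `(k*_i − κ)`-step recoverable
with respect to the eigen-plan, then agent `i`'s realized trajectory passes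
through `π_i(τ^k(k*_i))` at time `k*_i`, i.e. it synchronizes at `k*_i`. -/
theorem synchronization_under_disturbance {ι : Type*} {Xi : ι → Type*}
    (T : ∀ i, Xi i → Xi i → Prop)
    (plan : ℕ → ∀ i, Xi i)
    (i : ι) (Xsync : Set (∀ i, Xi i))
    (k kstar : ℕ)
    (e : ℕ → ℕ → Xi i)          -- eigen-plan of agent i at each time step
    (ζ : ℕ → Xi i)              -- realized trajectory of agent i
    -- k*_i is the least time after k at which the plan is in a sync state
    (hkstar : IsLeast {m | k < m ∧ plan m ∈ Xsync} kstar)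
    -- at time k the eigen-plan is the projection of the plan τ^k
    (hinit : ∀ m, k ≤ m → e k m = plan m i)
    -- no disturbance: the eigen-plan is kept unchanged
    (hnodist : ∀ κ, k ≤ κ → κ < kstar → ζ κ = e κ κ →
      ∀ m, κ < m → e (κ + 1) m = e κ m)
    -- disturbance: it is (k*_i − κ)-step recoverable w.r.t. the eigen-plan,
    -- and the minimal recovery rule rejoins the eigen-plan at the earliest
    -- recoverable horizon n*, then follows it
    (hdist : ∀ κ, k ≤ κ → κ ≤ kstar → ζ κ ≠ e κ κ →
      ζ κ ∈ Reach (T i) (kstar - κ) (e κ kstar) ∧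
      ∃ nstar, IsLeast {n | ζ κ ∈ Reach (T i) n (e κ (κ + n))} nstar ∧
        e (κ + 1) κ = ζ κ ∧
        (∀ m, κ ≤ m → T i (e (κ + 1) m) (e (κ + 1) (m + 1))) ∧
        (∀ m, κ + nstar ≤ m → e (κ + 1) m = e κ m)) :
    ζ kstar = plan kstar i := by
  have hk : k ≤ kstar := hkstar.1.1.le
  have hstep : ∀ κ, k ≤ κ → κ < kstar → e (κ + 1) kstar = e κ kstar := by
    intro κ hκ hκk
    by_cases hζ : ζ κ = e κ κ
    · exact hnodist κ hκ hκk hζ kstar hκk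
    · obtain ⟨hreach, nstar, hleast, -, -, hrejoin⟩ := hdist κ hκ hκk.le hζ
      exact apply_eq_of_isLeast_recovery_horizon hκk.le hreach hleast hrejoin
  have hsync : e kstar kstar = plan kstar i :=
    (Nat.eq_of_forall_succ_eq (f := fun κ => e κ kstar) hk hstep).trans (hinit kstar hk)
  have hζ : ζ kstar = e kstar kstar := by
    by_contra hζ
    have hreach := (hdist kstar hk le_rfl hζ).1
    rw [Nat.sub_self] at hreach
    exact hζ (mem_reach_zero_iff.1 hreach)
  rw [hζ, hsync]
end
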